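/- Let R be a domain, B = R[x^{±1}] the Laurent polynomial ring in one variable over R, and A an R-subalgebra of B generated as an R-algebra by monic monomials x^a (a ∈ ℤ), with A strictly larger than the image of R. Let S = A ∩ B^× and S⁻¹A = {b ∈ B : s·b ∈ A for some s ∈ S}. Then the following are equivalent: (1) A is quasi-factorially closed in B; (2) the subgroup of ℤ generated by M(A) = {a ∈ ℤ : x^a ∈ A} is all of ℤ (i.e., gcd of the elements of M(A) is 1); (3) S⁻¹A = B; (4) the gap set Gap(A) is finite. -/

import Mathlib

/-!
Let `M ⊆ ℤ` be the additive monoid generated by the exponents, so that `A` consists of the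
Laurent polynomials supported in `M`, and `M(A) = S(A) = M`.

If `M - M = ℤ`, a single monomial `x^c ∈ A` shifts any given finite support into `M`, so
`S⁻¹A = B`, which in turn makes `A` qfc. Moreover `M` then contains all integers beyond some
bound on the side of any nonzero `m ∈ M`, which leaves only finitely many gaps.

Conversely, `x^m - 1 = (x - 1) b` lies in `A` for `m ∈ M \ {0}`; qfc provides a unit `u` with
`u (x - 1) ∈ A`, and units of a group algebra of `ℤ` over a domain are monomials `r x^n`, so
`n, n + 1 ∈ M`. If `M - M ≠ ℤ`, then `1 ∉ M - M` and the integers `k m + 1` in the cone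
are infinitely many gaps.
-/

/-- An `R`-subalgebra `A` of `B` is quasi-factorially closed (qfc) in `B`. -/
def IsQfc {R B : Type*} [CommSemiring R] [CommRing B] [Algebra R B] (A : Subalgebra R B) : Prop :=
  ∀ a b : B, a ≠ 0 → b ≠ 0 → a * b ∈ A →
    ∃ u v : Bˣ, (u : B) * a ∈ A ∧ (v : B) * b ∈ A

/-- The cone of a subset `D ⊆ ℤ` in `ℝ`: all finite nonnegative real combinations. -/
def coneOfZ (D : Set ℤ) : Set ℝ :=
  {x | ∃ c : ℤ →₀ ℝ, (↑c.support : Set ℤ) ⊆ D ∧ (∀ a, 0 ≤ c a) ∧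
      x = c.sum fun a t => t * (a : ℝ)}

/-- `M(A)`: the set of `a ∈ ℤ` with `x^a ∈ A`. -/
def monSet {R : Type*} [CommRing R] (A : Set (LaurentPolynomial R)) : Set ℤ :=
  {a | (LaurentPolynomial.T a : LaurentPolynomial R) ∈ A}

/-- `S(A)`: the union of the supports of the elements of `A`. -/
def suppSet {R : Type*} [CommRing R] (A : Set (LaurentPolynomial R)) : Set ℤ :=
  {a | ∃ f ∈ A, a ∈ f.coeff.support}

/-- `C(A)`: integers lying in the cone generated by `S(A)`. -/
def latticeCone {R : Type*} [CommRing R] (A : Set (LaurentPolynomial R)) : Set ℤ :=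
  {a | (a : ℝ) ∈ coneOfZ (suppSet A)}

/-- The gap set `Gap(A) = C(A) \ M(A)`. -/
def gapSet {R : Type*} [CommRing R] (A : Set (LaurentPolynomial R)) : Set ℤ :=
  latticeCone A \ monSet A

/-- The localization `S⁻¹A` of `A` at `S = A ∩ B^×`, identified with an `R`-subalgebra of `B`. -/
def locSet {B : Type*} [CommRing B] (A : Set B) : Set B :=
  {b | ∃ s ∈ A, IsUnit s ∧ s * b ∈ A}

theorem Int.addSubgroup_eq_top_iff_one_mem {H : AddSubgroup ℤ} : H = ⊤ ↔ (1 : ℤ) ∈ H :=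
  ⟨fun h => h ▸ AddSubgroup.mem_top 1,
    fun h => top_unique (Int.zmultiples_one ▸ AddSubgroup.zmultiples_le.mpr h)⟩

theorem mul_nonneg_of_mem_coneOfZ {S : Set ℤ} {m : ℤ} (hS : ∀ n ∈ S, 0 ≤ n * m) {x : ℝ}
    (hx : x ∈ coneOfZ S) : 0 ≤ x * m := by
  obtain ⟨c, hcS, hc, rfl⟩ := hx
  rw [Finsupp.sum, Finset.sum_mul]
  refine Finset.sum_nonneg fun a ha => ?_
  rw [mul_assoc]
  exact mul_nonneg (hc a) (by exact_mod_cast hS a (hcS ha))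

theorem mem_coneOfZ_of_mul_nonneg {S : Set ℤ} {m : ℤ} (hm : m ∈ S) (hm0 : m ≠ 0) {x : ℝ}
    (hx : 0 ≤ x * m) : x ∈ coneOfZ S := by
  have hm0' : (m : ℝ) ≠ 0 := by exact_mod_cast hm0
  refine ⟨Finsupp.single m (x / m), ?_, fun a => ?_, ?_⟩
  · exact (Finset.coe_subset.mpr Finsupp.support_single_subset).trans (by simpa using hm)
  · rw [Finsupp.single_apply]
    split_ifs
    · rw [← mul_div_mul_right x _ hm0']
      exact div_nonneg hx (mul_self_nonneg _)
    · rfl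
  · rw [Finsupp.sum_single_index (zero_mul _), div_mul_cancel₀ _ hm0']

namespace AddSubmonoid

section AddCommGroup

variable {G : Type*} [AddCommGroup G] (M : AddSubmonoid G)

theorem exists_add_mem_of_mem_closure {z : G} (hz : z ∈ AddSubgroup.closure (M : Set G)) :
    ∃ c ∈ M, c + z ∈ M := by
  induction hz using AddSubgroup.closure_induction with
  | mem x hx => exact ⟨0, zero_mem M, by rwa [zero_add]⟩
  | zero => exact ⟨0, zero_mem M, by rw [add_zero]; exact zero_mem M⟩
  | add x y _ _ hx hy =>
    obtain ⟨c, hc, hcx⟩ := hx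
    obtain ⟨d, hd, hdy⟩ := hy
    exact ⟨c + d, add_mem hc hd, by convert add_mem hcx hdy using 1; abel⟩
  | neg x _ hx =>
    obtain ⟨c, hc, hcx⟩ := hx
    exact ⟨c + x, hcx, by rwa [add_neg_cancel_right]⟩

theorem exists_forall_add_mem (h : AddSubgroup.closure (M : Set G) = ⊤) (s : Finset G) :
    ∃ c ∈ M, ∀ z ∈ s, c + z ∈ M := by
  classical
  induction s using Finset.induction_on with
  | empty => exact ⟨0, zero_mem M, by simp⟩
  | insert a s _ ih =>
    obtain ⟨c, hc, hcs⟩ := ih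
    obtain ⟨d, hd, hda⟩ := M.exists_add_mem_of_mem_closure (h ▸ AddSubgroup.mem_top (c + a))
    refine ⟨d + c, add_mem hd hc, ?_⟩
    simp only [Finset.mem_insert, forall_eq_or_imp, add_assoc]
    exact ⟨hda, fun z hz => add_mem hd (hcs z hz)⟩

end AddCommGroup

variable {M : AddSubmonoid ℤ} {m : ℤ}

theorem mul_mem_of_nonneg {k : ℤ} (hk : 0 ≤ k) (hm : m ∈ M) : k * m ∈ M := by
  simpa [Int.toNat_of_nonneg hk] using M.nsmul_mem hm k.toNat

theorem exists_forall_mem_of_mul_nonneg (h : AddSubgroup.closure (M : Set ℤ) = ⊤)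
    (hm : m ∈ M) (hm0 : m ≠ 0) : ∃ c, ∀ z, 0 ≤ (z - c) * m → z ∈ M := by
  obtain ⟨c, -, hc⟩ := M.exists_forall_add_mem h (Finset.Ico 0 |m|)
  refine ⟨c, fun z hz => ?_⟩
  have hr0 : 0 ≤ (z - c) % m := Int.emod_nonneg _ hm0
  have hrm : (z - c) % m < |m| := Int.emod_lt_abs _ hm0
  have hdiv := Int.mul_ediv_add_emod (z - c) m
  have hk : 0 ≤ (z - c) / m := by
    by_contra! hk
    have hm' : 0 < |m| := abs_pos.mpr hm0
    rw [← hdiv] at hz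
    nlinarith [mul_le_mul_of_nonneg_left (le_abs_self m) hr0, abs_mul_abs_self m,
      mul_pos hm' (sub_pos.mpr hrm),
      mul_nonneg (mul_self_nonneg m) (show 0 ≤ -1 - (z - c) / m by omega)]
  have hz : z = (c + (z - c) % m) + (z - c) / m * m := by linarith
  rw [hz]
  exact add_mem (hc _ (Finset.mem_Ico.mpr ⟨hr0, hrm⟩)) (mul_mem_of_nonneg hk hm)

theorem finite_cone_diff_of_closure_eq_top (h : AddSubgroup.closure (M : Set ℤ) = ⊤)
    (hm : m ∈ M) (hm0 : m ≠ 0) : ({z : ℤ | (z : ℝ) ∈ coneOfZ M} \ M).Finite := by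
  obtain ⟨c, hc⟩ := exists_forall_mem_of_mul_nonneg h hm hm0
  by_cases hneg : ∃ n ∈ M, n * m < 0
  · -- `M` has elements on both sides of `0`, so `M = ℤ`.
    obtain ⟨n, hn, hnm⟩ := hneg
    refine Set.finite_empty.subset fun z hz => hz.2 ?_
    have hk : 0 ≤ |(z - c) * m| := abs_nonneg _
    have hzn : z - |(z - c) * m| * n ∈ M := hc _ <| by
      nlinarith [neg_abs_le ((z - c) * m)]
    simpa using add_mem hzn (mul_mem_of_nonneg hk hn)
  · -- `M`, hence its cone, lies on the side of `m`, so every gap lies between `0` and `c`.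
    push Not at hneg
    refine (Set.finite_Icc (min 0 c) (max 0 c)).subset fun z ⟨hzC, hzM⟩ => ?_
    have hz : 0 ≤ z * m := by exact_mod_cast mul_nonneg_of_mem_coneOfZ hneg hzC
    have hzc : (z - c) * m < 0 := lt_of_not_ge fun h' => hzM (hc z h')
    rw [Set.mem_Icc]
    rcases hm0.lt_or_gt with hm' | hm'
    · have : c < z ∧ z ≤ 0 := ⟨by nlinarith, by nlinarith⟩
      omega
    · have : 0 ≤ z ∧ z < c := ⟨by nlinarith, by nlinarith⟩
      omega

theorem closure_eq_top_of_finite_cone_diff (hm : m ∈ M) (hm0 : m ≠ 0)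
    (hfin : ({z : ℤ | (z : ℝ) ∈ coneOfZ M} \ M).Finite) :
    AddSubgroup.closure (M : Set ℤ) = ⊤ := by
  rw [Int.addSubgroup_eq_top_iff_one_mem]
  by_contra h1
  -- Otherwise every `(k + 1) * m + 1` is a gap: it lies on the side of `m`, and were it in `M`,
  -- subtracting `(k + 1) * m` would put `1` into `M - M`.
  refine Set.infinite_of_injective_forall_mem (f := fun k : ℕ => (k + 1) * m + 1) ?_ ?_ hfin
  · intro a b hab
    simpa [hm0] using hab
  · intro k
    refine ⟨mem_coneOfZ_of_mul_nonneg hm hm0 ?_, fun hk => h1 ?_⟩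
    · have : (0 : ℤ) ≤ ((k + 1) * m + 1) * m := by
        have hk : (0 : ℤ) ≤ k := k.cast_nonneg
        rcases hm0.lt_or_gt with hm' | hm' <;> nlinarith [mul_nonneg hk (mul_self_nonneg m)]
      exact_mod_cast this
    · have := sub_mem (AddSubgroup.subset_closure hk)
        (AddSubgroup.zsmul_mem _ (AddSubgroup.subset_closure hm) (k + 1))
      simpa using this

end AddSubmonoid

namespace AddMonoidAlgebra

theorem exists_eq_single_of_isUnit {k A : Type*} [Semiring k] [NoZeroDivisors k] [AddMonoid A]
    [TwoUniqueSums A] {f : k[A]} (hf : IsUnit f) : ∃ a r, f = single a r := by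
  classical
  nontriviality k using Subsingleton.elim f (single 0 0)
  obtain ⟨g, hfg⟩ := hf.exists_right_inv
  have hsf : f.coeff.support.Nonempty := by simpa using hf.ne_zero
  have hsg : g.coeff.support.Nonempty := by
    simpa using right_ne_zero_of_mul (hfg ▸ one_ne_zero : f * g ≠ 0)
  -- A pair with a unique sum contributes a nonzero coefficient to `f * g = 1`, so its sum is `0`.
  have hsum : ∀ a ∈ f.coeff.support, ∀ b ∈ g.coeff.support,
      UniqueAdd f.coeff.support g.coeff.support a b → a + b = 0 := by
    intro a ha b hb hab
    have : (f * g).coeff (a + b) ≠ 0 := by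
      rw [coeff_mul_add_of_uniqueAdd hab]
      exact mul_ne_zero (Finsupp.mem_support_iff.mp ha) (Finsupp.mem_support_iff.mp hb)
    simpa [hfg, one_def, Finsupp.single_apply, eq_comm] using this
  have hcard : f.coeff.support.card * g.coeff.support.card ≤ 1 := by
    by_contra! hlt
    obtain ⟨⟨a₁, b₁⟩, hp₁, ⟨a₂, b₂⟩, hp₂, hne, hu₁, hu₂⟩ :=
      TwoUniqueSums.uniqueAdd_of_one_lt_card hlt
    rw [Finset.mem_product] at hp₁ hp₂
    obtain ⟨rfl, rfl⟩ := hu₁ hp₂.1 hp₂.2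
      ((hsum _ hp₂.1 _ hp₂.2 hu₂).trans (hsum _ hp₁.1 _ hp₁.2 hu₁).symm)
    exact hne rfl
  obtain ⟨a, ha⟩ : ∃ a, f.coeff.support = {a} := Finset.card_eq_one.mp <| by
    have := hsg.card_pos
    nlinarith [hsf.card_pos]
  exact ⟨a, f.coeff a, ext (Finsupp.support_eq_singleton.mp ha).2⟩

end AddMonoidAlgebra

theorem isQfc_of_locSet_eq_univ {R B : Type*} [CommSemiring R] [CommRing B] [Algebra R B]
    {A : Subalgebra R B} (h : locSet (A : Set B) = Set.univ) : IsQfc A := by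
  intro a b _ _ _
  obtain ⟨s, -, hs, hsa⟩ : a ∈ locSet (A : Set B) := h ▸ Set.mem_univ a
  obtain ⟨t, -, ht, htb⟩ : b ∈ locSet (A : Set B) := h ▸ Set.mem_univ b
  exact ⟨hs.unit, ht.unit, hsa, htb⟩

namespace LaurentPolynomial

section CommSemiring

variable {R : Type*} [CommSemiring R]

theorem mem_adjoin_T_image_iff {D : Set ℤ} {f : R[T;T⁻¹]} :
    f ∈ Algebra.adjoin R (T '' D) ↔
      ↑f.coeff.support ⊆ (AddSubmonoid.closure D : Set ℤ) := by
  constructor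
  · intro hf
    induction hf using Algebra.adjoin_induction with
    | mem x hx =>
      obtain ⟨a, ha, rfl⟩ := hx
      exact (Finset.coe_subset.mpr Finsupp.support_single_subset).trans
        (by simpa using AddSubmonoid.subset_closure ha)
    | algebraMap r =>
      exact (Finset.coe_subset.mpr Finsupp.support_single_subset).trans (by simp [zero_mem])
    | add x y _ _ hx hy =>
      exact (Finset.coe_subset.mpr Finsupp.support_add).trans (by simpa using ⟨hx, hy⟩)
    | mul x y _ _ hx hy =>
      refine (Finset.coe_subset.mpr (AddMonoidAlgebra.support_coeff_mul_subset x y)).trans ?_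
      rw [Finset.coe_add]
      exact AddSubmonoid.add_subset hx hy
  · intro hf
    have hT : ∀ n ∈ AddSubmonoid.closure D,
        (T n : R[T;T⁻¹]) ∈ Algebra.adjoin R (T '' D) := by
      intro n hn
      induction hn using AddSubmonoid.closure_induction with
      | mem a ha => exact Algebra.subset_adjoin ⟨a, ha, rfl⟩
      | zero => rw [T_zero]; exact one_mem _
      | add a b _ _ ha hb => rw [T_add]; exact mul_mem ha hb
    rw [← AddMonoidAlgebra.mem_supported (R := R),
      AddMonoidAlgebra.supported_eq_span_single] at hf
    refine Submodule.span_le (p := Subalgebra.toSubmodule (Algebra.adjoin R (T '' D))).mpr ?_ hf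
    rintro - ⟨n, hn, rfl⟩
    exact hT n hn

end CommSemiring

variable {R : Type*} [CommRing R] {D : Set ℤ}

theorem T_sub_one_dvd (m : ℤ) : (T 1 - 1 : R[T;T⁻¹]) ∣ T m - 1 := by
  have hnat (n : ℕ) : (T 1 - 1 : R[T;T⁻¹]) ∣ T n - 1 := by
    simpa [T_pow] using sub_one_dvd_pow_sub_one (T 1 : R[T;T⁻¹]) n
  obtain ⟨n, rfl | rfl⟩ := Int.eq_nat_or_neg m
  · exact hnat n
  · have : (T (-n) - 1 : R[T;T⁻¹]) = -T (-n) * (T n - 1) := by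
      rw [neg_mul, mul_sub, ← T_add, neg_add_cancel, T_zero, mul_one]
      ring
    exact this ▸ (hnat n).mul_left _

theorem T_sub_one_ne_zero [Nontrivial R] {m : ℤ} (hm : m ≠ 0) :
    (T m - 1 : R[T;T⁻¹]) ≠ 0 := by
  rw [sub_ne_zero, ← T_zero]
  intro h
  have := congrArg degree h
  rw [degree_T, degree_T, WithBot.coe_inj] at this
  exact hm this

section Nontrivial

variable [Nontrivial R]

theorem support_coeff_T (n : ℤ) : (T n : R[T;T⁻¹]).coeff.support = {n} := by
  rw [T, AddMonoidAlgebra.coeff_single, Finsupp.support_single _ one_ne_zero]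

theorem T_mem_adjoin_T_image_iff {n : ℤ} :
    (T n : R[T;T⁻¹]) ∈ Algebra.adjoin R (T '' D) ↔ n ∈ AddSubmonoid.closure D := by
  simp [mem_adjoin_T_image_iff, support_coeff_T]

theorem monSet_adjoin_T_image :
    monSet (R := R) (Algebra.adjoin R (T '' D : Set R[T;T⁻¹])) = AddSubmonoid.closure D :=
  Set.ext fun _ => T_mem_adjoin_T_image_iff

theorem suppSet_adjoin_T_image :
    suppSet (R := R) (Algebra.adjoin R (T '' D : Set R[T;T⁻¹])) = AddSubmonoid.closure D := by
  ext n
  constructor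
  · rintro ⟨f, hf, hn⟩
    exact mem_adjoin_T_image_iff.mp hf hn
  · intro hn
    exact ⟨T n, T_mem_adjoin_T_image_iff.mpr hn, by simp [support_coeff_T]⟩

theorem gapSet_adjoin_T_image :
    gapSet (R := R) (Algebra.adjoin R (T '' D : Set R[T;T⁻¹])) =
      {z : ℤ | (z : ℝ) ∈ coneOfZ (AddSubmonoid.closure D)} \ AddSubmonoid.closure D := by
  rw [gapSet, latticeCone, suppSet_adjoin_T_image, monSet_adjoin_T_image]

theorem locSet_adjoin_T_image_eq_univ
    (h : AddSubgroup.closure (AddSubmonoid.closure D : Set ℤ) = ⊤) :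
    locSet (B := R[T;T⁻¹]) (Algebra.adjoin R (T '' D : Set R[T;T⁻¹])) = Set.univ := by
  refine Set.eq_univ_of_forall fun f => ?_
  obtain ⟨c, hc, hcf⟩ := (AddSubmonoid.closure D).exists_forall_add_mem h f.coeff.support
  refine ⟨T c, T_mem_adjoin_T_image_iff.mpr hc, isUnit_T c, mem_adjoin_T_image_iff.mpr ?_⟩
  rw [T, AddMonoidAlgebra.support_coeff_single_mul _ _ (by simp)]
  intro k hk
  simp only [Finset.coe_map, Set.mem_image, Finset.mem_coe] at hk
  obtain ⟨j, hj, rfl⟩ := hk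
  exact hcf j hj

end Nontrivial

theorem closure_eq_top_of_isQfc [IsDomain R] {m : ℤ} (hm : m ∈ AddSubmonoid.closure D)
    (hm0 : m ≠ 0)
    (h : IsQfc (Algebra.adjoin R (T '' D : Set R[T;T⁻¹]))) :
    AddSubgroup.closure (AddSubmonoid.closure D : Set ℤ) = ⊤ := by
  obtain ⟨b, hb⟩ := T_sub_one_dvd (R := R) m
  have hmem : (T 1 - 1) * b ∈ Algebra.adjoin R (T '' D : Set R[T;T⁻¹]) := by
    rw [← hb]
    exact sub_mem (T_mem_adjoin_T_image_iff.mpr hm) (one_mem _)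
  obtain ⟨u, -, hu, -⟩ := h _ b (T_sub_one_ne_zero one_ne_zero)
    (right_ne_zero_of_mul (hb ▸ T_sub_one_ne_zero hm0)) hmem
  -- The unit `u` is a monomial `r T^n`, so `u (T - 1) = r T^(n+1) - r T^n` puts both `n` and
  -- `n + 1` into `closure D`.
  obtain ⟨n, r, hur⟩ := AddMonoidAlgebra.exists_eq_single_of_isUnit u.isUnit
  have hr : r ≠ 0 := by
    rintro rfl
    exact u.ne_zero (hur.trans (AddMonoidAlgebra.single_zero n))
  have hform : (u : R[T;T⁻¹]) * (T 1 - 1) =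
      AddMonoidAlgebra.single (n + 1) r - AddMonoidAlgebra.single n r := by
    rw [hur, mul_sub, mul_one, single_eq_C_mul_T, single_eq_C_mul_T, mul_assoc, ← T_add]
  have hsupp := mem_adjoin_T_image_iff.mp (hform ▸ hu)
  have h1 : n + 1 ∈ AddSubmonoid.closure D := hsupp <| by
    simp [-single_eq_C_mul_T, AddMonoidAlgebra.coeff_single, hr]
  have h0 : n ∈ AddSubmonoid.closure D := hsupp <| by
    simp [-single_eq_C_mul_T, AddMonoidAlgebra.coeff_single, hr]
  rw [Int.addSubgroup_eq_top_iff_one_mem]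
  simpa using sub_mem (AddSubgroup.subset_closure h1) (AddSubgroup.subset_closure h0)

end LaurentPolynomial

open LaurentPolynomial AddSubmonoid in
/-- For an `R`-subalgebra `A ≠ R` of `B = R[x^{±1}]` generated by monic monomials, TFAE:
(1) `A` is qfc in `B`; (2) the subgroup generated by `M(A)` is all of `ℤ`;
(3) `S⁻¹A = B`; (4) `Gap(A)` is finite. -/
theorem isQfc_tfae_one_variable (R : Type*) [CommRing R] [IsDomain R]
    (A : Subalgebra R (LaurentPolynomial R))
    (hgen : ∃ D : Set ℤ,
      A = Algebra.adjoin R ((fun a => (LaurentPolynomial.T a : LaurentPolynomial R)) '' D))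
    (hA : A ≠ ⊥) :
    [IsQfc A,
     AddSubgroup.closure (monSet (A : Set (LaurentPolynomial R))) = ⊤,
     locSet (A : Set (LaurentPolynomial R)) = Set.univ,
     (gapSet (A : Set (LaurentPolynomial R))).Finite].TFAE := by
  obtain ⟨D, rfl⟩ := hgen
  obtain ⟨m, hmD, hm0⟩ : ∃ m ∈ D, m ≠ 0 := by
    by_contra! hD
    refine hA (eq_bot_iff.mpr (Algebra.adjoin_le ?_))
    rintro - ⟨a, ha, rfl⟩
    show T a ∈ (⊥ : Subalgebra R R[T;T⁻¹])
    rw [hD a ha, T_zero]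
    exact one_mem _
  have hm := AddSubmonoid.subset_closure hmD
  rw [monSet_adjoin_T_image, gapSet_adjoin_T_image]
  tfae_have 1 → 2 := closure_eq_top_of_isQfc hm hm0
  tfae_have 2 → 3 := locSet_adjoin_T_image_eq_univ
  tfae_have 3 → 1 := isQfc_of_locSet_eq_univ
  tfae_have 2 → 4 := fun h => finite_cone_diff_of_closure_eq_top h hm hm0
  tfae_have 4 → 2 := closure_eq_top_of_finite_cone_diff hm hm0
  tfae_finish
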